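/- Corollary (certain reasoning at μ → 1 under possibility of Δ): Let α be an L-sentence and Δ a finite set of L-sentences such that there exists a possible index i with Mᵢ ⊨ Δ. Then L(α|Δ) = 1 if and only if Δ ⊫ α (α is an empirical consequence of Δ). -/

import Mathlib

/-!
If `Δ` itself is possible, it is the only cardinality-maximal possible subset of `Δ`, so `⟨Δ⟩` is
the set of possible indices satisfying `Δ`. `L(α|Δ)` is an average of the `0/1` values `⟦α⟧ᵢ` over
`⟨Δ⟩` with positive weights, hence equals `1` exactly when `α` holds at every index of `⟨Δ⟩`.
-/

open FirstOrder
open scoped Classical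

variable {L : FirstOrder.Language} {ι : Type*}

/-- `Sat M α i` means the structure `M i` satisfies the sentence `α` (i.e. `M i ⊨ α`). -/
def Sat (M : ι → Type*) [∀ i, L.Structure (M i)] (α : L.Sentence) (i : ι) : Prop :=
  FirstOrder.Language.Sentence.Realize (M := M i) α

/-- The indicator `⟦α⟧ᵢ`: `1` if `M i ⊨ α`, `0` otherwise (a natural number). -/
noncomputable def ind (M : ι → Type*) [∀ i, L.Structure (M i)]
    (α : L.Sentence) (i : ι) : ℕ :=
  if Sat M α i then 1 else 0

/-- `M i ⊨ S`: the structure `M i` satisfies every sentence in the finite set `S`. -/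
def SatAll (M : ι → Type*) [∀ i, L.Structure (M i)]
    (S : Finset L.Sentence) (i : ι) : Prop :=
  ∀ β ∈ S, Sat M β i

/-- `|Δ|ᵢ`: the number of sentences of `Δ` that are true in `M i`. -/
noncomputable def nSat (M : ι → Type*) [∀ i, L.Structure (M i)]
    (Δ : Finset L.Sentence) (i : ι) : ℕ :=
  (Δ.filter (fun β => Sat M β i)).card

/-- A finite set `S` of sentences is possible if some possible index satisfies all of it. -/
def PossibleSet (M : ι → Type*) [∀ i, L.Structure (M i)] (p : ι → ℝ)
    (S : Finset L.Sentence) : Prop :=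
  ∃ i, 0 < p i ∧ SatAll M S i

/-- `MPS Δ`: the cardinality-maximal possible subsets of `Δ`. -/
def MPS (M : ι → Type*) [∀ i, L.Structure (M i)] (p : ι → ℝ)
    (Δ : Finset L.Sentence) : Set (Finset L.Sentence) :=
  {S | S ⊆ Δ ∧ PossibleSet M p S ∧
    ∀ T ⊆ Δ, PossibleSet M p T → T.card ≤ S.card}

/-- `⟨Δ⟩`: the possible indices satisfying some cardinality-maximal possible subset of `Δ`. -/
def angleSet (M : ι → Type*) [∀ i, L.Structure (M i)] (p : ι → ℝ)
    (Δ : Finset L.Sentence) : Set ι :=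
  {i | 0 < p i ∧ ∃ S ∈ MPS M p Δ, SatAll M S i}

/-- `L(α|Δ) = (∑_{i∈⟨Δ⟩} ⟦α⟧ᵢ·p i) / (∑_{i∈⟨Δ⟩} p i)`. -/
noncomputable def Lcond (M : ι → Type*) [∀ i, L.Structure (M i)] (p : ι → ℝ)
    (α : L.Sentence) (Δ : Finset L.Sentence) : ℝ :=
  (∑ᶠ i ∈ angleSet M p Δ, (ind M α i : ℝ) * p i) / (∑ᶠ i ∈ angleSet M p Δ, p i)

/-- `P_μ(α|Δ)`, with natural-number exponents (so `0 ^ 0 = 1`). -/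
noncomputable def Pcond (M : ι → Type*) [∀ i, L.Structure (M i)] (p : ι → ℝ)
    (μ : ℝ) (α : L.Sentence) (Δ : Finset L.Sentence) : ℝ :=
  (∑ᶠ i, μ ^ (ind M α i) * (1 - μ) ^ (1 - ind M α i) *
      (μ ^ (nSat M Δ i) * (1 - μ) ^ (Δ.card - nSat M Δ i)) * p i) /
  (∑ᶠ i, μ ^ (nSat M Δ i) * (1 - μ) ^ (Δ.card - nSat M Δ i) * p i)

/-- A finite set `S` of sentences is consistent if some index satisfies all of it. -/
def ConsistentSet (M : ι → Type*) [∀ i, L.Structure (M i)]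
    (S : Finset L.Sentence) : Prop :=
  ∃ i, SatAll M S i

/-- `MCS Δ`: the cardinality-maximal consistent subsets of `Δ`. -/
def MCS (M : ι → Type*) [∀ i, L.Structure (M i)]
    (Δ : Finset L.Sentence) : Set (Finset L.Sentence) :=
  {S | S ⊆ Δ ∧ ConsistentSet M S ∧
    ∀ T ⊆ Δ, ConsistentSet M T → T.card ≤ S.card}

/-- `⟪Δ⟫`: the indices satisfying some cardinality-maximal consistent subset of `Δ`. -/
def dangleSet (M : ι → Type*) [∀ i, L.Structure (M i)]
    (Δ : Finset L.Sentence) : Set ι :=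
  {i | ∃ S ∈ MCS M Δ, SatAll M S i}

section
variable {M : ι → Type*} [∀ i, L.Structure (M i)] {p : ι → ℝ}

lemma ind_mul_eq_self_iff {α : L.Sentence} {i : ι} (hi : p i ≠ 0) :
    (ind M α i : ℝ) * p i = p i ↔ Sat M α i := by
  unfold ind
  split_ifs with h <;> simp [h, hi.symm]

lemma ind_mul_le {α : L.Sentence} {i : ι} (hi : 0 ≤ p i) : (ind M α i : ℝ) * p i ≤ p i := by
  unfold ind
  split_ifs <;> simp [hi]

lemma MPS_eq_singleton_of_possibleSet {Δ : Finset L.Sentence} (hΔ : PossibleSet M p Δ) :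
    MPS M p Δ = {Δ} := by
  refine Set.eq_singleton_iff_unique_mem.mpr
    ⟨⟨subset_rfl, hΔ, fun T hT _ => Finset.card_le_card hT⟩, ?_⟩
  rintro S ⟨hSΔ, -, hSmax⟩
  exact Finset.eq_of_subset_of_card_le hSΔ (hSmax Δ subset_rfl hΔ)

lemma angleSet_eq_of_possibleSet {Δ : Finset L.Sentence} (hΔ : PossibleSet M p Δ) :
    angleSet M p Δ = {i | 0 < p i ∧ SatAll M Δ i} := by
  ext i
  simp [angleSet, MPS_eq_singleton_of_possibleSet hΔ]

lemma Lcond_eq_one_iff {α : L.Sentence} {Δ : Finset L.Sentence}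
    (hfin : (angleSet M p Δ).Finite) (hne : (angleSet M p Δ).Nonempty) :
    Lcond M p α Δ = 1 ↔ ∀ i ∈ angleSet M p Δ, Sat M α i := by
  have hpos : ∀ i ∈ hfin.toFinset, 0 < p i := fun i hi => ((hfin.mem_toFinset).mp hi).1
  have hsum_pos : 0 < ∑ i ∈ hfin.toFinset, p i :=
    Finset.sum_pos hpos (hfin.toFinset_nonempty.mpr hne)
  rw [Lcond, ← hfin.coe_toFinset, finsum_mem_coe_finset, finsum_mem_coe_finset,
    div_eq_one_iff_eq hsum_pos.ne',
    Finset.sum_eq_sum_iff_of_le fun i hi => ind_mul_le (hpos i hi).le]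
  exact forall₂_congr fun i hi => ind_mul_eq_self_iff (hpos i hi).ne'

end

theorem stmt10_general
    (M : ι → Type*) [∀ i, L.Structure (M i)]
    (p : ι → ℝ) (hpfin : (Function.support p).Finite)
    (α : L.Sentence) (Δ : Finset L.Sentence)
    (hposs : ∃ i, 0 < p i ∧ SatAll M Δ i) :
    Lcond M p α Δ = 1 ↔ ∀ i, 0 < p i → SatAll M Δ i → Sat M α i := by
  have hA := angleSet_eq_of_possibleSet hposs
  have hfin : (angleSet M p Δ).Finite :=
    hpfin.subset fun i hi => (hA ▸ hi : 0 < p i ∧ _).1.ne'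
  rw [Lcond_eq_one_iff hfin (hA ▸ hposs), hA]
  simp only [Set.mem_ofPred_eq, and_imp]

/-- **Corollary** (certain reasoning at `μ → 1` under possibility of `Δ`): if some possible
index satisfies `Δ`, then `L(α|Δ) = 1` iff `α` is an empirical consequence of `Δ`. -/
theorem stmt10 [Countable ι]
    (M : ι → Type*) [∀ i, L.Structure (M i)] [∀ i, Nonempty (M i)]
    (p : ι → ℝ) (hp0 : ∀ i, 0 ≤ p i) (hpfin : (Function.support p).Finite)
    (hp1 : ∑ᶠ i, p i = 1)
    (α : L.Sentence) (Δ : Finset L.Sentence)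
    (hposs : ∃ i, 0 < p i ∧ SatAll M Δ i) :
    Lcond M p α Δ = 1 ↔ ∀ i, 0 < p i → SatAll M Δ i → Sat M α i :=
  stmt10_general M p hpfin α Δ hposs
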